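/- Let S be a string over an alphabet of size σ, let Y_S = y₁…y_c be any parsing of S, and let L be the sequence of phrase lengths. Then the k-bounded parsing cost satisfies C_k(Y_S) ≤ |S|·H_k(S) + |Y_S|·k·log σ, where H_k is the k-order empirical entropy. -/

import Mathlib

open Finset

/-- Number of (possibly overlapping) occurrences of `v` as a substring of `S`,
with the convention `|S|_ε = |S|`. -/
def occ {α : Type*} [DecidableEq α] (S v : List α) : ℕ :=
  if v = [] then S.length
  else ((List.range S.length).filter (fun i => (S.drop i).take v.length = v)).length

/-- Unnormalized k-order empirical entropy `|S| * H_k(S)` (logs base 2). -/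
noncomputable def nHk {Γ : Type*} [Fintype Γ] [DecidableEq Γ] (k : ℕ) (S : List Γ) : ℝ :=
  -∑ v : Fin k → Γ, ∑ a : Γ,
    (occ S (List.ofFn v ++ [a]) : ℝ) *
      Real.logb 2 ((occ S (List.ofFn v ++ [a]) : ℝ) / (occ S (List.ofFn v) : ℝ))

/-- The `k`-bounded phrase probability
`𝒫_k(y) = σ^{-min(|y|,k)} ∏_{j=k+1}^{|y|} |S|_{y[j-k..j]} / |S|_{y[j-k..j-1]}`. -/
noncomputable def kProb {Γ : Type*} [DecidableEq Γ] (σ k : ℕ) (S y : List Γ) : ℝ :=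
  ((σ : ℝ) ^ (min y.length k))⁻¹ *
    ∏ j ∈ Finset.range (y.length - k),
      ((occ S ((y.drop j).take (k + 1)) : ℝ) / (occ S ((y.drop j).take k) : ℝ))

/-- The `k`-bounded phrase cost `C_k(y) = -log 𝒫_k(y)`. -/
noncomputable def kCost {Γ : Type*} [DecidableEq Γ] (σ k : ℕ) (S y : List Γ) : ℝ :=
  -Real.logb 2 (kProb σ k S y)

/-- The `k`-bounded parsing cost `C_k(Y_S) = ∑ᵢ C_k(yᵢ)`. -/
noncomputable def kParseCost {Γ : Type*} [DecidableEq Γ] (σ k : ℕ) (S : List Γ)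
    (Y : List (List Γ)) : ℝ :=
  (Y.map (kCost σ k S)).sum

/-!
Splitting `𝒫_k(y)` into the factor `σ^{-min(|y|,k)}` and the product over the windows of length
`k + 1` of `y`, the cost `C_k(y)` is `min(|y|,k) log σ` plus the sum, over these windows `w`, of the
nonnegative terms `-log (|S|_w / |S|_{w[..k]})`. The windows of distinct phrases sit at distinct
positions of `S`, so their total is at most the same sum over all windows of `S`; grouping those
by content gives exactly `|S| H_k(S)`.
-/

namespace KBoundedCost

section Windows

variable {Γ : Type*}

def windowSum (k : ℕ) (F : List Γ → ℝ) (w : List Γ) : ℝ :=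
  ∑ j ∈ range (w.length - k), F ((w.drop j).take (k + 1))

lemma windowSum_append_ge {k : ℕ} {F : List Γ → ℝ} (hF : ∀ w, 0 ≤ F w) (u v : List Γ) :
    windowSum k F u + windowSum k F v ≤ windowSum k F (u ++ v) := by
  have hleft : ∀ j ∈ range (u.length - k),
      F (((u ++ v).drop j).take (k + 1)) = F ((u.drop j).take (k + 1)) := by
    intro j hj
    rw [List.drop_append_of_le_length (by simp only [mem_range] at hj; omega),
      List.take_append_of_le_length (by simp only [mem_range, List.length_drop] at hj ⊢; omega)]
  have hsub : ∀ n, u.length - k ≤ n →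
      windowSum k F u ≤ ∑ j ∈ range n, F (((u ++ v).drop j).take (k + 1)) := fun n hn =>
    (sum_congr rfl hleft).symm.le.trans
      (sum_le_sum_of_subset_of_nonneg (range_mono hn) fun _ _ _ => hF _)
  unfold windowSum
  rcases le_or_gt k v.length with hk | hk
  · rw [List.length_append, show u.length + v.length - k = u.length + (v.length - k) by omega,
      sum_range_add]
    refine add_le_add (hsub _ (by omega)) (sum_le_sum fun j _ => ?_)
    rw [← List.drop_drop, List.drop_left]
  · rw [show v.length - k = 0 by omega, sum_range_zero, add_zero]
    exact hsub _ (by simp only [List.length_append]; omega)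

lemma sum_map_windowSum_le_flatten {k : ℕ} {F : List Γ → ℝ} (hF : ∀ w, 0 ≤ F w)
    (Y : List (List Γ)) : (Y.map (windowSum k F)).sum ≤ windowSum k F Y.flatten := by
  induction Y with
  | nil => simp [windowSum]
  | cons y Y ih =>
    rw [List.map_cons, List.sum_cons, List.flatten_cons]
    exact (add_le_add le_rfl ih).trans (windowSum_append_ge hF y Y.flatten)

lemma exists_ofFn_append_singleton {k : ℕ} {w : List Γ} (hw : w.length = k + 1) :
    ∃ (v : Fin k → Γ) (a : Γ), List.ofFn v ++ [a] = w := by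
  obtain ⟨l, a, rfl⟩ := List.eq_nil_or_concat w |>.resolve_left
    (List.ne_nil_of_length_eq_add_one hw)
  obtain rfl : l.length = k := by simpa using hw
  exact ⟨fun i : Fin l.length => l[(i : ℕ)], a, by rw [List.ofFn_getElem, List.concat_eq_append]⟩

end Windows

variable {Γ : Type*} [DecidableEq Γ]

/-- `-log` of the empirical probability of the last symbol of `w` given the `k` before it. -/
noncomputable def condCost (k : ℕ) (S w : List Γ) : ℝ :=
  -Real.logb 2 ((occ S w : ℝ) / (occ S (w.take k) : ℝ))

lemma occ_le_length (S v : List Γ) : occ S v ≤ S.length := by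
  unfold occ
  split
  · exact le_rfl
  · exact (List.length_filter_le _ _).trans (by simp)

lemma occ_pos_of_isInfix {S v : List Γ} (h : v <:+: S) (hS : S ≠ []) : 0 < occ S v := by
  unfold occ
  split_ifs with hv
  · exact List.length_pos_iff.2 hS
  · obtain ⟨p, t, rfl⟩ := h
    have : 0 < v.length := List.length_pos_iff.2 hv
    refine List.length_pos_iff_exists_mem.2 ⟨p.length, List.mem_filter.2 ⟨?_, ?_⟩⟩
    · simp only [List.mem_range, List.length_append]
      omega
    · simp [List.append_assoc]

lemma occ_le_occ_of_isPrefix {S u w : List Γ} (h : u <+: w) : occ S w ≤ occ S u := by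
  by_cases hu : u = []
  · rw [show occ S u = S.length from if_pos hu]
    exact occ_le_length S w
  have hw : w ≠ [] := fun hw => hu (List.prefix_nil.1 (hw ▸ h))
  unfold occ
  rw [if_neg hu, if_neg hw]
  refine (List.monotone_filter_right _ fun i hi => ?_).length_le
  simp only [decide_eq_true_eq] at hi ⊢
  obtain ⟨t, rfl⟩ := h
  have := congrArg (List.take u.length) hi
  rwa [List.take_take, min_eq_left (by simp), List.take_left] at this

lemma occ_eq_card_windows (S u : List Γ) {k : ℕ} (hu : u.length = k + 1) :
    occ S u = #{p ∈ range (S.length - k) | (S.drop p).take (k + 1) = u} := by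
  have hne : u ≠ [] := List.ne_nil_of_length_eq_add_one hu
  rw [occ, if_neg hne, hu]
  change #{p ∈ range S.length | _} = _
  congr 1
  ext p
  simp only [mem_filter, mem_range]
  constructor
  · rintro ⟨hp, hw⟩
    have := congrArg List.length hw
    simp only [List.length_take, List.length_drop] at this
    exact ⟨by omega, hw⟩
  · rintro ⟨hp, hw⟩
    exact ⟨by omega, hw⟩

lemma condCost_nonneg (k : ℕ) (S w : List Γ) : 0 ≤ condCost k S w := by
  rw [condCost, neg_nonneg]
  apply Real.logb_nonpos one_lt_two (by positivity)
  exact div_le_one_of_le₀ (mod_cast occ_le_occ_of_isPrefix (List.take_prefix k w))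
    (Nat.cast_nonneg _)

lemma sum_occ_mul_eq_windowSum [Fintype Γ] (k : ℕ) (S : List Γ) (F : List Γ → ℝ) :
    ∑ v : Fin k → Γ, ∑ a : Γ, (occ S (List.ofFn v ++ [a]) : ℝ) * F (List.ofFn v ++ [a]) =
      windowSum k F S := by
  set e : (Fin k → Γ) × Γ → List Γ := fun x => List.ofFn x.1 ++ [x.2]
  have he : Function.Injective e := fun x y hxy => by
    obtain ⟨h1, h2⟩ := List.append_inj hxy (by simp)
    exact Prod.ext (List.ofFn_injective h1) (List.singleton_inj.1 h2)
  have hmaps : ∀ p ∈ range (S.length - k), (S.drop p).take (k + 1) ∈ univ.image e := by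
    intro p hp
    have hlen : ((S.drop p).take (k + 1)).length = k + 1 := by
      simp only [mem_range] at hp
      simp only [List.length_take, List.length_drop]
      omega
    obtain ⟨v, a, hva⟩ := exists_ofFn_append_singleton hlen
    exact mem_image.2 ⟨(v, a), mem_univ _, hva⟩
  rw [← Fintype.sum_prod_type' (fun v a => (occ S (e (v, a)) : ℝ) * F (e (v, a)))]
  simp only [Prod.mk.eta]
  rw [← sum_image (f := fun u => (occ S u : ℝ) * F u) fun x _ y _ hxy => he hxy, windowSum,
    ← sum_fiberwise_of_maps_to hmaps]
  refine sum_congr rfl fun u hu => ?_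
  obtain ⟨x, -, rfl⟩ := mem_image.1 hu
  rw [sum_congr rfl fun p hp => congrArg F (mem_filter.1 hp).2, sum_const, nsmul_eq_mul,
    occ_eq_card_windows S (e x) (k := k) (by simp [e])]

lemma nHk_eq_windowSum [Fintype Γ] (k : ℕ) (S : List Γ) :
    nHk k S = windowSum k (condCost k S) S := by
  rw [← sum_occ_mul_eq_windowSum, nHk, ← sum_neg_distrib]
  refine sum_congr rfl fun v _ => ?_
  rw [← sum_neg_distrib]
  refine sum_congr rfl fun a _ => ?_
  rw [condCost, List.take_left' (List.length_ofFn), mul_neg]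

lemma kCost_eq_of_isInfix [Fintype Γ] (k : ℕ) {S y : List Γ} (h : y <:+: S) :
    kCost (Fintype.card Γ) k S y =
      min y.length k * Real.logb 2 (Fintype.card Γ) + windowSum k (condCost k S) y := by
  rcases eq_or_ne y [] with rfl | hy
  · simp [kCost, kProb, windowSum]
  have : Nonempty Γ := ⟨y.head hy⟩
  have hS : S ≠ [] := fun hS => hy (List.eq_nil_of_infix_nil (hS ▸ h))
  have hocc : ∀ j m, (0 : ℝ) < occ S ((y.drop j).take m) := fun j m =>
    mod_cast occ_pos_of_isInfix ((List.take_prefix _ _).isInfix.trans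
      ((List.drop_suffix _ _).isInfix.trans h)) hS
  have hratio : ∀ j ∈ range (y.length - k),
      (occ S ((y.drop j).take (k + 1)) : ℝ) / occ S ((y.drop j).take k) ≠ 0 :=
    fun j _ => (div_pos (hocc j _) (hocc j _)).ne'
  have hσ : ((Fintype.card Γ : ℝ) ^ min y.length k)⁻¹ ≠ 0 := by positivity
  rw [kCost, kProb, Real.logb_mul hσ (prod_ne_zero_iff.2 hratio), Real.logb_inv,
    Real.logb_pow, Real.logb_prod _ _ hratio, neg_add, neg_neg, ← sum_neg_distrib, windowSum]
  push_cast
  congr 1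
  refine sum_congr rfl fun j _ => ?_
  rw [condCost, List.take_take, min_eq_left (Nat.le_succ k)]

lemma kParseCost_eq [Fintype Γ] (k : ℕ) {S : List Γ} {Y : List (List Γ)}
    (hY : Y.flatten = S) :
    kParseCost (Fintype.card Γ) k S Y =
      (Y.map fun y => ((min y.length k : ℕ) : ℝ) * Real.logb 2 (Fintype.card Γ)).sum +
        (Y.map (windowSum k (condCost k S))).sum := by
  rw [kParseCost, ← List.sum_map_add]
  exact congrArg List.sum (List.map_congr_left fun y hy =>
    kCost_eq_of_isInfix k (hY ▸ List.infix_of_mem_flatten hy))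

end KBoundedCost

open KBoundedCost in
theorem stmt3_general {Γ : Type*} [Fintype Γ] [DecidableEq Γ] (S : List Γ) (k : ℕ)
    (Y : List (List Γ)) (hY : Y.flatten = S) :
    kParseCost (Fintype.card Γ) k S Y ≤
      nHk k S + (Y.length : ℝ) * k * Real.logb 2 (Fintype.card Γ) := by
  have hlog : 0 ≤ Real.logb 2 (Fintype.card Γ) :=
    div_nonneg (Real.log_natCast_nonneg _) (Real.log_nonneg one_le_two)
  have hcontext : (Y.map fun y => ((min y.length k : ℕ) : ℝ) * Real.logb 2 (Fintype.card Γ)).sum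
      ≤ Y.length * (k * Real.logb 2 (Fintype.card Γ)) := by
    refine (List.sum_le_card_nsmul _ ((k : ℝ) * Real.logb 2 (Fintype.card Γ))
      fun _ hx => ?_).trans_eq (by simp)
    obtain ⟨y, -, rfl⟩ := List.mem_map.1 hx
    exact mul_le_mul_of_nonneg_right (mod_cast min_le_right _ _) hlog
  calc kParseCost (Fintype.card Γ) k S Y
      = _ := kParseCost_eq k hY
    _ ≤ Y.length * (k * Real.logb 2 (Fintype.card Γ)) + windowSum k (condCost k S) Y.flatten :=
        add_le_add hcontext (sum_map_windowSum_le_flatten (condCost_nonneg k S) Y)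
    _ = nHk k S + Y.length * k * Real.logb 2 (Fintype.card Γ) := by
        rw [nHk_eq_windowSum, hY]
        ring

theorem stmt3 {Γ : Type*} [Fintype Γ] [DecidableEq Γ] (S : List Γ) (k : ℕ)
    (Y : List (List Γ)) (hY : Y.flatten = S) (hne : ∀ y ∈ Y, y ≠ []) :
    kParseCost (Fintype.card Γ) k S Y ≤
      nHk k S + (Y.length : ℝ) * k * Real.logb 2 (Fintype.card Γ) :=
  stmt3_general S k Y hY
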